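/- The relation Z — relating (t, d⃗) to (u, e⃗), where t = (A,B,C) is a state of one of M₁, M₂, u = (D,E,F) is a state of the other model, d⃗, e⃗ ∈ (ℕ⁺)^k, iff [d⃗ ↦ e⃗] is a bijection and for all 1 ≤ l ≤ k: d_l ∈ A implies e_l ∈ D, and d_l ∈ B implies e_l ∈ D ∪ E — is a CD-asimulation between the G-models M₁ and M₂. -/
import Mathlib


/-- A quasi-partition: a triple `(A,B,C)` of pairwise disjoint subsets of `ℕ⁺` covering
`ℕ⁺`, with `A` and `C` infinite and `B` empty or infinite. -/
structure QP : Type where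
  A : Set ℕ+
  B : Set ℕ+
  C : Set ℕ+
  cover : ∀ n : ℕ+, n ∈ A ∨ n ∈ B ∨ n ∈ C
  disjAB : ∀ n : ℕ+, n ∈ A → n ∈ B → False
  disjAC : ∀ n : ℕ+, n ∈ A → n ∈ C → False
  disjBC : ∀ n : ℕ+, n ∈ B → n ∈ C → False
  infA : A.Infinite
  infC : C.Infinite
  infB : B = ∅ ∨ B.Infinite

/-- The quasi-order `(A,B,C) ⊑ (D,E,F) ↔ A ⊆ D ∧ F ⊆ C` on quasi-partitions. -/
def QP.sqle (x y : QP) : Prop := x.A ⊆ y.A ∧ y.C ⊆ x.C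

/-- `v₁ = {3n}`, the positive multiples of 3. -/
def vA : Set ℕ+ := {n | ∃ m : ℕ, (n : ℕ) = 3 * m}
/-- `v₂ = {3n+1}`. -/
def vB : Set ℕ+ := {n | ∃ m : ℕ, (n : ℕ) = 3 * m + 1}
/-- `v₃ = {3n+2}`. -/
def vC : Set ℕ+ := {n | ∃ m : ℕ, (n : ℕ) = 3 * m + 2}
/-- `w₁ = {2n}`, the positive even numbers. -/
def wA : Set ℕ+ := {n | ∃ m : ℕ, (n : ℕ) = 2 * m}
/-- `w₃ = {2n+1}`, the odd numbers. -/
def wC : Set ℕ+ := {n | ∃ m : ℕ, (n : ℕ) = 2 * m + 1}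

lemma vB_infinite : vB.Infinite := by
  refine Set.infinite_of_injective_forall_mem
    (f := fun m : ℕ => (⟨3 * m + 1, by omega⟩ : ℕ+)) ?_ ?_
  · intro a b h
    have h' : (3 * a + 1 : ℕ) = 3 * b + 1 := congrArg (fun x : ℕ+ => (x : ℕ)) h
    omega
  · intro m
    exact ⟨m, rfl⟩

/-- The base point `v = (v₁, v₂, v₃)` of `M₁`. -/
def vQP : QP where
  A := vA
  B := vB
  C := vC
  cover := by
    intro n
    have h : (n : ℕ) % 3 = 0 ∨ (n : ℕ) % 3 = 1 ∨ (n : ℕ) % 3 = 2 := by omega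
    rcases h with h | h | h
    · exact Or.inl ⟨(n : ℕ) / 3, by omega⟩
    · exact Or.inr (Or.inl ⟨(n : ℕ) / 3, by omega⟩)
    · exact Or.inr (Or.inr ⟨(n : ℕ) / 3, by omega⟩)
  disjAB := by rintro n ⟨a, ha⟩ ⟨b, hb⟩; omega
  disjAC := by rintro n ⟨a, ha⟩ ⟨b, hb⟩; omega
  disjBC := by rintro n ⟨a, ha⟩ ⟨b, hb⟩; omega
  infA := by
    refine Set.infinite_of_injective_forall_mem
      (f := fun m : ℕ => (⟨3 * m + 3, by omega⟩ : ℕ+)) ?_ ?_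
    · intro a b h
      have h' : (3 * a + 3 : ℕ) = 3 * b + 3 := congrArg (fun x : ℕ+ => (x : ℕ)) h
      omega
    · intro m
      refine ⟨m + 1, ?_⟩
      show (3 * m + 3 : ℕ) = 3 * (m + 1)
      ring
  infC := by
    refine Set.infinite_of_injective_forall_mem
      (f := fun m : ℕ => (⟨3 * m + 2, by omega⟩ : ℕ+)) ?_ ?_
    · intro a b h
      have h' : (3 * a + 2 : ℕ) = 3 * b + 2 := congrArg (fun x : ℕ+ => (x : ℕ)) h
      omega
    · intro m
      exact ⟨m, rfl⟩
  infB := Or.inr vB_infinite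

/-- The base point `w = (w₁, ∅, w₃)` of `M₂`. -/
def wQP : QP where
  A := wA
  B := ∅
  C := wC
  cover := by
    intro n
    have h : (n : ℕ) % 2 = 0 ∨ (n : ℕ) % 2 = 1 := by omega
    rcases h with h | h
    · exact Or.inl ⟨(n : ℕ) / 2, by omega⟩
    · exact Or.inr (Or.inr ⟨(n : ℕ) / 2, by omega⟩)
  disjAB := by rintro n - h; exact h
  disjAC := by rintro n ⟨a, ha⟩ ⟨b, hb⟩; omega
  disjBC := by rintro n h -; exact h
  infA := by
    refine Set.infinite_of_injective_forall_mem
      (f := fun m : ℕ => (⟨2 * m + 2, by omega⟩ : ℕ+)) ?_ ?_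
    · intro a b h
      have h' : (2 * a + 2 : ℕ) = 2 * b + 2 := congrArg (fun x : ℕ+ => (x : ℕ)) h
      omega
    · intro m
      refine ⟨m + 1, ?_⟩
      show (2 * m + 2 : ℕ) = 2 * (m + 1)
      ring
  infC := by
    refine Set.infinite_of_injective_forall_mem
      (f := fun m : ℕ => (⟨2 * m + 1, by omega⟩ : ℕ+)) ?_ ?_
    · intro a b h
      have h' : (2 * a + 1 : ℕ) = 2 * b + 1 := congrArg (fun x : ℕ+ => (x : ℕ)) h
      omega
    · intro m
      exact ⟨m, rfl⟩
  infB := Or.inl rfl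

/-- The states of `M₁`. -/
def W1 : Type := {x : QP // vQP.sqle x ∧ (x.B ∩ vB).Infinite}

/-- The states of `M₂`. -/
def W2 : Type := {x : QP // (wQP.sqle x ∧ x.B ≠ ∅) ∨ x = wQP}

/-- The signature with just the two unary predicates `P` and `Q`. -/
inductive PQ : Type where
  | P | Q
deriving DecidableEq

abbrev arPQ : PQ → ℕ := fun _ => 1

structure GModel (σ : Type) (ar : σ → ℕ) where
  W : Type
  le : W → W → Prop
  le_refl : ∀ w, le w w
  le_trans : ∀ u v w, le u v → le v w → le u w
  base : W
  base_le : ∀ w, le base w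
  D : Type
  d_nonempty : Nonempty D
  interp : (P : σ) → W → (Fin (ar P) → D) → Prop
  interp_mono : ∀ (P : σ) (v w), le v w → ∀ as, interp P v as → interp P w as

lemma mono_PQ (x y : QP) (h : x.sqle y) :
    (x.A ⊆ y.A) ∧ (x.A ∪ x.B ⊆ y.A ∪ y.B) := by
  refine ⟨h.1, ?_⟩
  rintro a (ha | ha)
  · exact Or.inl (h.1 ha)
  · rcases y.cover a with h1 | h1 | h1
    · exact Or.inl h1
    · exact Or.inr h1
    · exact absurd (x.disjBC a ha (h.2 h1)) not_false

/-- The G-model `M₁`. -/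
def M₁ : GModel PQ arPQ where
  W := W1
  le x y := x.1.sqle y.1
  le_refl x := ⟨subset_rfl, subset_rfl⟩
  le_trans x y z h1 h2 := ⟨h1.1.trans h2.1, h2.2.trans h1.2⟩
  base := ⟨vQP, ⟨⟨subset_rfl, subset_rfl⟩, by
    show (vQP.B ∩ vB).Infinite
    have : vQP.B ∩ vB = vB := Set.inter_self vB
    rw [this]; exact vB_infinite⟩⟩
  base_le x := x.2.1
  D := ℕ+
  d_nonempty := inferInstance
  interp p x as :=
    match p with
    | .P => as 0 ∈ x.1.A ∪ x.1.B
    | .Q => as 0 ∈ x.1.A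
  interp_mono p x y hxy as h := by
    cases p with
    | P => exact (mono_PQ x.1 y.1 hxy).2 h
    | Q => exact (mono_PQ x.1 y.1 hxy).1 h

/-- The G-model `M₂`. -/
def M₂ : GModel PQ arPQ where
  W := W2
  le x y := x.1.sqle y.1
  le_refl x := ⟨subset_rfl, subset_rfl⟩
  le_trans x y z h1 h2 := ⟨h1.1.trans h2.1, h2.2.trans h1.2⟩
  base := ⟨wQP, Or.inr rfl⟩
  base_le x := by
    rcases x.2 with h | h
    · exact h.1
    · rw [h]; exact ⟨subset_rfl, subset_rfl⟩
  D := ℕ+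
  d_nonempty := inferInstance
  interp p x as :=
    match p with
    | .P => as 0 ∈ x.1.A ∪ x.1.B
    | .Q => as 0 ∈ x.1.A
  interp_mono p x y hxy as h := by
    cases p with
    | P => exact (mono_PQ x.1 y.1 hxy).2 h
    | Q => exact (mono_PQ x.1 y.1 hxy).1 h

/-- A CD-asimulation between the G-models `M₁` and `M₂`. -/
structure CDAsimulation {σ : Type} {ar : σ → ℕ} (N₁ N₂ : GModel σ ar) where
  Z₁ : {k : ℕ} → N₁.W → (Fin k → N₁.D) → N₂.W → (Fin k → N₂.D) → Prop
  Z₂ : {k : ℕ} → N₂.W → (Fin k → N₂.D) → N₁.W → (Fin k → N₁.D) → Prop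
  atom₁ : ∀ {k : ℕ} (t : N₁.W) (d : Fin k → N₁.D) (u : N₂.W) (e : Fin k → N₂.D),
    Z₁ t d u e → ∀ (P : σ) (ts : Fin (ar P) → Fin k),
      N₁.interp P t (fun i => d (ts i)) → N₂.interp P u (fun i => e (ts i))
  atom₂ : ∀ {k : ℕ} (t : N₂.W) (d : Fin k → N₂.D) (u : N₁.W) (e : Fin k → N₁.D),
    Z₂ t d u e → ∀ (P : σ) (ts : Fin (ar P) → Fin k),
      N₂.interp P t (fun i => d (ts i)) → N₁.interp P u (fun i => e (ts i))
  step₁ : ∀ {k : ℕ} (t : N₁.W) (d : Fin k → N₁.D) (u : N₂.W) (e : Fin k → N₂.D),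
    Z₁ t d u e → ∀ v : N₂.W, N₂.le u v →
      ∃ w : N₁.W, N₁.le t w ∧ Z₁ w d v e ∧ Z₂ v e w d
  step₂ : ∀ {k : ℕ} (t : N₂.W) (d : Fin k → N₂.D) (u : N₁.W) (e : Fin k → N₁.D),
    Z₂ t d u e → ∀ v : N₁.W, N₁.le u v →
      ∃ w : N₂.W, N₂.le t w ∧ Z₂ w d v e ∧ Z₁ v e w d
  forth₁ : ∀ {k : ℕ} (t : N₁.W) (d : Fin k → N₁.D) (u : N₂.W) (e : Fin k → N₂.D),
    Z₁ t d u e → ∀ f : N₁.D, ∃ g : N₂.D, Z₁ t (Fin.snoc d f) u (Fin.snoc e g)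
  forth₂ : ∀ {k : ℕ} (t : N₂.W) (d : Fin k → N₂.D) (u : N₁.W) (e : Fin k → N₁.D),
    Z₂ t d u e → ∀ f : N₂.D, ∃ g : N₁.D, Z₂ t (Fin.snoc d f) u (Fin.snoc e g)
  back₁ : ∀ {k : ℕ} (t : N₁.W) (d : Fin k → N₁.D) (u : N₂.W) (e : Fin k → N₂.D),
    Z₁ t d u e → ∀ g : N₂.D, ∃ f : N₁.D, Z₁ t (Fin.snoc d f) u (Fin.snoc e g)
  back₂ : ∀ {k : ℕ} (t : N₂.W) (d : Fin k → N₂.D) (u : N₁.W) (e : Fin k → N₁.D),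
    Z₂ t d u e → ∀ g : N₁.D, ∃ f : N₂.D, Z₂ t (Fin.snoc d f) u (Fin.snoc e g)

/-- The relation of Definition 5.3: `((A,B,C), d⃗) Z ((D,E,F), e⃗)` iff `[d⃗ ↦ e⃗]` is a
bijection, `d_l ∈ A → e_l ∈ D`, and `d_l ∈ B → e_l ∈ D ∪ E`. -/
def Zrel {k : ℕ} (t : QP) (d : Fin k → ℕ+) (u : QP) (e : Fin k → ℕ+) : Prop :=
  (∀ l m : Fin k, d l = d m ↔ e l = e m) ∧
  (∀ l : Fin k, (d l ∈ t.A → e l ∈ u.A) ∧ (d l ∈ t.B → e l ∈ u.A ∪ u.B))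

section ZrelProof

lemma split_infinite (X : Set ℕ+) (hX : X.Infinite) :
    ∃ Y : Set ℕ+, Y ⊆ X ∧ Y.Infinite ∧ (X \ Y).Infinite := by
  obtain ⟨f⟩ : Nonempty (ℕ ↪ X) := ⟨hX.natEmbedding⟩
  refine ⟨Set.range (fun m : ℕ => ((f (2 * m) : X) : ℕ+)), ?_, ?_, ?_⟩
  · rintro x ⟨m, rfl⟩; exact (f (2 * m)).2
  · refine Set.infinite_range_of_injective ?_
    intro a b h
    have := f.injective (Subtype.ext h); omega
  · refine Set.infinite_of_injective_forall_mem
      (f := fun m : ℕ => ((f (2 * m + 1) : X) : ℕ+)) ?_ ?_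
    · intro a b h; have := f.injective (Subtype.ext h); omega
    · intro m
      refine ⟨(f (2 * m + 1)).2, ?_⟩
      rintro ⟨n, hn⟩
      have := f.injective (Subtype.ext hn)
      omega

/-- Core of the back-and-forth step condition, at the level of quasi-partitions. -/
lemma Zrel_step {k : ℕ} (t u v : QP) (d e : Fin k → ℕ+)
    (hZ : Zrel t d u e) (huv : u.sqle v) :
    ∃ w : QP, t.sqle w ∧ Zrel w d v e ∧ Zrel v e w d ∧
      w.B.Infinite ∧ t.B \ Set.range d ⊆ w.B := by
  obtain ⟨hbij, hcond⟩ := hZ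
  have key : ∀ l m : Fin k, d l = d m → e l = e m := fun l m h => (hbij l m).1 h
  have hCd : (t.C \ Set.range d).Infinite := t.infC.diff (Set.finite_range d)
  obtain ⟨Y, hY_sub, hY_inf, hYc_inf⟩ := split_infinite _ hCd
  -- component of e l in v, for d l ∈ range d
  have compC : ∀ l : Fin k, e l ∈ v.C → d l ∈ t.C := by
    intro l hl
    rcases t.cover (d l) with h | h | h
    · exact absurd (huv.1 ((hcond l).1 h)) (fun hA => v.disjAC _ hA hl)
    · rcases (hcond l).2 h with h' | h'
      · exact absurd (huv.1 h') (fun hA => v.disjAC _ hA hl)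
      · exact absurd (huv.2 hl) (fun hC => u.disjBC _ h' hC)
    · exact h
  refine ⟨⟨
    {x | (∃ l, d l = x ∧ e l ∈ v.A) ∨ (x ∉ Set.range d ∧ x ∈ t.A)},
    {x | (∃ l, d l = x ∧ e l ∈ v.B) ∨ (x ∉ Set.range d ∧ x ∈ t.B) ∨ x ∈ Y},
    {x | (∃ l, d l = x ∧ e l ∈ v.C) ∨ (x ∉ Set.range d ∧ x ∈ t.C ∧ x ∉ Y)},
    ?_, ?_, ?_, ?_, ?_, ?_, ?_⟩, ?_, ?_, ?_, ?_, ?_⟩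
  · -- cover
    intro n
    by_cases hn : n ∈ Set.range d
    · obtain ⟨l, rfl⟩ := hn
      rcases v.cover (e l) with h | h | h
      · exact Or.inl (Or.inl ⟨l, rfl, h⟩)
      · exact Or.inr (Or.inl (Or.inl ⟨l, rfl, h⟩))
      · exact Or.inr (Or.inr (Or.inl ⟨l, rfl, h⟩))
    · rcases t.cover n with h | h | h
      · exact Or.inl (Or.inr ⟨hn, h⟩)
      · exact Or.inr (Or.inl (Or.inr (Or.inl ⟨hn, h⟩)))
      · by_cases hY : n ∈ Y
        · exact Or.inr (Or.inl (Or.inr (Or.inr hY)))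
        · exact Or.inr (Or.inr (Or.inr ⟨hn, h, hY⟩))
  · -- disjAB
    rintro n (⟨l, rfl, hlA⟩ | ⟨hnr, hnA⟩) hB
    · rcases hB with ⟨m, hm, hmB⟩ | ⟨hnr, _⟩ | hY
      · exact v.disjAB _ hlA (key m l hm ▸ hmB)
      · exact hnr ⟨l, rfl⟩
      · exact (hY_sub hY).2 ⟨l, rfl⟩
    · rcases hB with ⟨m, hm, _⟩ | ⟨_, hnB⟩ | hY
      · exact hnr ⟨m, hm⟩
      · exact t.disjAB _ hnA hnB
      · exact t.disjAC _ hnA (hY_sub hY).1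
  · -- disjAC
    rintro n (⟨l, rfl, hlA⟩ | ⟨hnr, hnA⟩) hC
    · rcases hC with ⟨m, hm, hmC⟩ | ⟨hnr, _, _⟩
      · exact v.disjAC _ hlA (key m l hm ▸ hmC)
      · exact hnr ⟨l, rfl⟩
    · rcases hC with ⟨m, hm, _⟩ | ⟨_, hnC, _⟩
      · exact hnr ⟨m, hm⟩
      · exact t.disjAC _ hnA hnC
  · -- disjBC
    rintro n (⟨l, rfl, hlB⟩ | ⟨hnr, hnB⟩ | hY) hC
    · rcases hC with ⟨m, hm, hmC⟩ | ⟨hnr, _, _⟩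
      · exact v.disjBC _ hlB (key m l hm ▸ hmC)
      · exact hnr ⟨l, rfl⟩
    · rcases hC with ⟨m, hm, _⟩ | ⟨_, hnC, _⟩
      · exact hnr ⟨m, hm⟩
      · exact t.disjBC _ hnB hnC
    · rcases hC with ⟨m, hm, _⟩ | ⟨_, _, hnY⟩
      · exact (hY_sub hY).2 ⟨m, hm⟩
      · exact hnY hY
  · -- infA
    refine (t.infA.diff (Set.finite_range d)).mono ?_
    rintro x ⟨hA, hr⟩
    exact Or.inr ⟨hr, hA⟩
  · -- infC
    refine hYc_inf.mono ?_
    rintro x ⟨⟨hC, hr⟩, hY⟩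
    exact Or.inr ⟨hr, hC, hY⟩
  · -- infB
    exact Or.inr (hY_inf.mono (fun x hx => Or.inr (Or.inr hx)))
  · -- t.sqle w
    constructor
    · intro x hx
      by_cases hr : x ∈ Set.range d
      · obtain ⟨l, rfl⟩ := hr
        exact Or.inl ⟨l, rfl, huv.1 ((hcond l).1 hx)⟩
      · exact Or.inr ⟨hr, hx⟩
    · rintro x (⟨l, rfl, hlC⟩ | ⟨_, hC, _⟩)
      · exact compC l hlC
      · exact hC
  · -- Zrel w d v e
    refine ⟨hbij, fun l => ⟨?_, ?_⟩⟩
    · rintro (⟨m, hm, hmA⟩ | ⟨hnr, _⟩)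
      · exact key m l hm ▸ hmA
      · exact absurd ⟨l, rfl⟩ hnr
    · rintro (⟨m, hm, hmB⟩ | ⟨hnr, _⟩ | hY)
      · exact Or.inr (key m l hm ▸ hmB)
      · exact absurd ⟨l, rfl⟩ hnr
      · exact absurd ⟨l, rfl⟩ (hY_sub hY).2
  · -- Zrel v e w d
    refine ⟨fun l m => (hbij l m).symm, fun l => ⟨?_, ?_⟩⟩
    · intro h; exact Or.inl ⟨l, rfl, h⟩
    · intro h; exact Or.inr (Or.inl ⟨l, rfl, h⟩)
  · -- w.B infinite
    exact hY_inf.mono (fun x hx => Or.inr (Or.inr hx))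
  · -- t.B \ range d ⊆ w.B
    rintro x ⟨hB, hr⟩
    exact Or.inr (Or.inl ⟨hr, hB⟩)

lemma snoc_bij {k : ℕ} (d e : Fin k → ℕ+) (f g : ℕ+)
    (hb : ∀ l m, d l = d m ↔ e l = e m)
    (hfg : ∀ m, f = d m ↔ g = e m) :
    ∀ l m : Fin (k + 1),
      Fin.snoc (α := fun _ => ℕ+) d f l = Fin.snoc (α := fun _ => ℕ+) d f m ↔
        Fin.snoc (α := fun _ => ℕ+) e g l = Fin.snoc (α := fun _ => ℕ+) e g m := by
  intro l m
  rcases Fin.eq_castSucc_or_eq_last l with ⟨i, rfl⟩ | rfl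
  · rcases Fin.eq_castSucc_or_eq_last m with ⟨j, rfl⟩ | rfl
    · simpa [Fin.snoc_castSucc] using hb i j
    · simp only [Fin.snoc_castSucc, Fin.snoc_last]
      rw [eq_comm, @eq_comm _ (e i)]
      exact hfg i
  · rcases Fin.eq_castSucc_or_eq_last m with ⟨j, rfl⟩ | rfl
    · simpa [Fin.snoc_castSucc, Fin.snoc_last] using hfg j
    · simp

/-- Core of the forth condition. -/
lemma Zrel_forth {k : ℕ} (t u : QP) (d e : Fin k → ℕ+)
    (hZ : Zrel t d u e) (f : ℕ+) :
    ∃ g : ℕ+, Zrel t (Fin.snoc d f) u (Fin.snoc e g) := by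
  obtain ⟨hbij, hcond⟩ := hZ
  by_cases hf : ∃ l, d l = f
  · obtain ⟨l0, hl0⟩ := hf
    refine ⟨e l0, snoc_bij d e f (e l0) hbij ?_, ?_⟩
    · intro m
      rw [← hl0]
      exact hbij l0 m
    · intro l
      rcases Fin.eq_castSucc_or_eq_last l with ⟨i, rfl⟩ | rfl
      · simpa [Fin.snoc_castSucc] using hcond i
      · simp only [Fin.snoc_last]
        subst hl0
        exact hcond l0
  · obtain ⟨g, hgA, hgr⟩ := (u.infA.diff (Set.finite_range e)).nonempty
    refine ⟨g, snoc_bij d e f g hbij ?_, ?_⟩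
    · intro m
      constructor
      · intro h; exact absurd ⟨m, h.symm⟩ hf
      · intro h; exact absurd ⟨m, h.symm⟩ hgr
    · intro l
      rcases Fin.eq_castSucc_or_eq_last l with ⟨i, rfl⟩ | rfl
      · simpa [Fin.snoc_castSucc] using hcond i
      · simp only [Fin.snoc_last]
        exact ⟨fun _ => hgA, fun _ => Or.inl hgA⟩

/-- Core of the back condition. -/
lemma Zrel_back {k : ℕ} (t u : QP) (d e : Fin k → ℕ+)
    (hZ : Zrel t d u e) (g : ℕ+) :
    ∃ f : ℕ+, Zrel t (Fin.snoc d f) u (Fin.snoc e g) := by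
  obtain ⟨hbij, hcond⟩ := hZ
  by_cases hg : ∃ l, e l = g
  · obtain ⟨l0, hl0⟩ := hg
    refine ⟨d l0, snoc_bij d e (d l0) g hbij ?_, ?_⟩
    · intro m
      rw [← hl0]
      exact hbij l0 m
    · intro l
      rcases Fin.eq_castSucc_or_eq_last l with ⟨i, rfl⟩ | rfl
      · simpa [Fin.snoc_castSucc] using hcond i
      · simp only [Fin.snoc_last]
        subst hl0
        exact hcond l0
  · obtain ⟨f, hfC, hfr⟩ := (t.infC.diff (Set.finite_range d)).nonempty
    refine ⟨f, snoc_bij d e f g hbij ?_, ?_⟩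
    · intro m
      constructor
      · intro h; exact absurd ⟨m, h.symm⟩ hfr
      · intro h; exact absurd ⟨m, h.symm⟩ hg
    · intro l
      rcases Fin.eq_castSucc_or_eq_last l with ⟨i, rfl⟩ | rfl
      · simpa [Fin.snoc_castSucc] using hcond i
      · simp only [Fin.snoc_last]
        exact ⟨fun h => absurd (t.disjAC _ h hfC) not_false,
               fun h => absurd (t.disjBC _ h hfC) not_false⟩

end ZrelProof
/-- Lemma 5.2: the relation `Z` of Definition 5.3 is a CD-asimulation between the
G-models `M₁` and `M₂`. -/
theorem Zrel_is_CDAsimulation :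
    ∃ Z : CDAsimulation M₁ M₂,
      (∀ (k : ℕ) (t : M₁.W) (d : Fin k → M₁.D) (u : M₂.W) (e : Fin k → M₂.D),
        Z.Z₁ t d u e ↔ Zrel t.1 d u.1 e) ∧
      (∀ (k : ℕ) (t : M₂.W) (d : Fin k → M₂.D) (u : M₁.W) (e : Fin k → M₁.D),
        Z.Z₂ t d u e ↔ Zrel t.1 d u.1 e) := by
  refine ⟨{
      Z₁ := fun t d u e => Zrel t.1 d u.1 e
      Z₂ := fun t d u e => Zrel t.1 d u.1 e
      atom₁ := ?_
      atom₂ := ?_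
      step₁ := ?_
      step₂ := ?_
      forth₁ := ?_
      forth₂ := ?_
      back₁ := ?_
      back₂ := ?_ },
    fun _ _ _ _ _ => Iff.rfl, fun _ _ _ _ _ => Iff.rfl⟩
  · -- atom₁
    intro k t d u e hZ P ts h
    cases P with
    | P =>
      rcases h with h | h
      · exact Or.inl ((hZ.2 (ts 0)).1 h)
      · exact (hZ.2 (ts 0)).2 h
    | Q => exact (hZ.2 (ts 0)).1 h
  · -- atom₂
    intro k t d u e hZ P ts h
    cases P with
    | P =>
      rcases h with h | h
      · exact Or.inl ((hZ.2 (ts 0)).1 h)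
      · exact (hZ.2 (ts 0)).2 h
    | Q => exact (hZ.2 (ts 0)).1 h
  · -- step₁
    intro k t d u e hZ v huv
    obtain ⟨w, htw, hZ1, hZ2, hwB, hsub⟩ := Zrel_step t.1 u.1 v.1 d e hZ huv
    refine ⟨⟨w, ⟨⟨t.2.1.1.trans htw.1, htw.2.trans t.2.1.2⟩, ?_⟩⟩, htw, hZ1, hZ2⟩
    refine (t.2.2.diff (Set.finite_range d)).mono ?_
    rintro x ⟨⟨hB, hv⟩, hr⟩
    exact ⟨hsub ⟨hB, hr⟩, hv⟩
  · -- step₂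
    intro k t d u e hZ v huv
    obtain ⟨w, htw, hZ1, hZ2, hwB, hsub⟩ := Zrel_step t.1 u.1 v.1 d e hZ huv
    have h0 : wQP.sqle t.1 := by
      rcases t.2 with h | h
      · exact h.1
      · rw [h]
        exact ⟨subset_rfl, subset_rfl⟩
    exact ⟨⟨w, Or.inl ⟨⟨h0.1.trans htw.1, htw.2.trans h0.2⟩, hwB.nonempty.ne_empty⟩⟩,
      htw, hZ1, hZ2⟩
  · -- forth₁
    intro k t d u e hZ f
    exact Zrel_forth t.1 u.1 d e hZ f
  · -- forth₂
    intro k t d u e hZ f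
    exact Zrel_forth t.1 u.1 d e hZ f
  · -- back₁
    intro k t d u e hZ g
    exact Zrel_back t.1 u.1 d e hZ g
  · -- back₂
    intro k t d u e hZ g
    exact Zrel_back t.1 u.1 d e hZ g
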